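/- Let Γ be a temporal theory over alphabet 𝒜 and Γ' any temporal theory over the same alphabet 𝒜. Then, for any length λ, TSM(Γ ∪ Γ') = { ⟨H',T'⟩|_𝒜 | ⟨H',T'⟩ ∈ TSM(σ(Γ) ∪ Γ') }, where TSM(Δ) denotes the set of temporal stable models of Δ of length λ. In other words, Γ and σ(Γ) are strongly equivalent modulo the auxiliary atoms not in 𝒜. -/

import Mathlib

/-!
`η(μ)` says exactly that the label `L_μ` satisfies, at both the here and the there level, the
one-step unfolding equation of the main connective of `μ`; for instance
`L_{φSψ} ↔ L_ψ ∨ (L_φ ∧ ●L_{φSψ})`, with `L_{φSψ} ↔ L_ψ` at time `0`. Truth of formulas satisfies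
the same equations, and they determine their solution: by induction on the formula and, for a
temporal connective, on time (forwards for past operators, backwards from the last instant for
future ones). Hence in a model of `σ(Γ)` the labels of the subformulas of `Γ` hold exactly where
their formulas hold in the restriction to `𝒜`, and every HT-trace over `𝒜` extends canonically
to such a model.

Minimality transfers both ways. A smaller model of `Γ ∪ Γ'` extends canonically to a model of
`σ(Γ) ∪ Γ'` which, by persistence, lies below the given one. A smaller model of `σ(Γ) ∪ Γ'`
restricts to a model of `Γ ∪ Γ'`; if the restriction is not smaller it is the whole trace, and
then the labels, being determined by the restriction, agree as well.
-/

/-- Syntax of temporal formulas over an alphabet of atoms `α`: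
`⊥`, atoms, `∧`, `∨`, `→`, previous `●`, since `S`, trigger `T`,
next `○`, until `U`, release `R`. -/
inductive TForm (α : Type) : Type
  | bot   : TForm α
  | atom  : α → TForm α
  | conj  : TForm α → TForm α → TForm α
  | disj  : TForm α → TForm α → TForm α
  | impl  : TForm α → TForm α → TForm α
  | prev  : TForm α → TForm α
  | since : TForm α → TForm α → TForm α
  | trig  : TForm α → TForm α → TForm α
  | next  : TForm α → TForm α
  | untl  : TForm α → TForm α → TForm α
  | rels  : TForm α → TForm α → TForm α

/-- THT_f satisfaction `⟨H,T⟩,k ⊨ φ` for finite traces of length `n`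
(time points are `0 ≤ k < n`). -/
def sat {α : Type} (n : ℕ) : (ℕ → Set α) → (ℕ → Set α) → ℕ → TForm α → Prop
  | _, _, _, .bot => False
  | H, _, k, .atom a => a ∈ H k
  | H, T, k, .conj φ ψ => sat n H T k φ ∧ sat n H T k ψ
  | H, T, k, .disj φ ψ => sat n H T k φ ∨ sat n H T k ψ
  | H, T, k, .impl φ ψ =>
      (sat n H T k φ → sat n H T k ψ) ∧ (sat n T T k φ → sat n T T k ψ)
  | H, T, k, .prev φ => 0 < k ∧ sat n H T (k - 1) φ
  | H, T, k, .since φ ψ =>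
      ∃ j, j ≤ k ∧ sat n H T j ψ ∧ ∀ i, j < i → i ≤ k → sat n H T i φ
  | H, T, k, .trig φ ψ =>
      ∀ j, j ≤ k → sat n H T j ψ ∨ ∃ i, j < i ∧ i ≤ k ∧ sat n H T i φ
  | H, T, k, .next φ => k + 1 < n ∧ sat n H T (k + 1) φ
  | H, T, k, .untl φ ψ =>
      ∃ j, k ≤ j ∧ j < n ∧ sat n H T j ψ ∧ ∀ i, k ≤ i → i < j → sat n H T i φ
  | H, T, k, .rels φ ψ =>
      ∀ j, k ≤ j → j < n → sat n H T j ψ ∨ ∃ i, k ≤ i ∧ i < j ∧ sat n H T i φ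

open Classical in
/-- The three-valued valuation `m[k,φ] ∈ {0,1,2}` associated with an HT-trace
`⟨H,T⟩` of length `n` (an empty `Finset.inf` is `⊤ = 2`, an empty `Finset.sup` is `⊥ = 0`). -/
noncomputable def val {α : Type} (H T : ℕ → Set α) (n : ℕ) : ℕ → TForm α → Fin 3
  | _, .bot => 0
  | k, .atom a => if a ∈ H k then 2 else if a ∈ T k then 1 else 0
  | k, .conj φ ψ => min (val H T n k φ) (val H T n k ψ)
  | k, .disj φ ψ => max (val H T n k φ) (val H T n k ψ)
  | k, .impl φ ψ => if val H T n k φ ≤ val H T n k ψ then 2 else val H T n k ψ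
  | k, .prev φ => if k = 0 then 0 else val H T n (k - 1) φ
  | k, .since φ ψ =>
      (Finset.range (k + 1)).sup fun j =>
        min (val H T n j ψ) ((Finset.Ioc j k).inf fun i => val H T n i φ)
  | k, .trig φ ψ =>
      (Finset.range (k + 1)).inf fun j =>
        max (val H T n j ψ) ((Finset.Ioc j k).sup fun i => val H T n i φ)
  | k, .next φ => if k + 1 = n then 0 else val H T n (k + 1) φ
  | k, .untl φ ψ =>
      (Finset.Ico k n).sup fun j =>
        min (val H T n j ψ) ((Finset.Ico k j).inf fun i => val H T n i φ)
  | k, .rels φ ψ =>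
      (Finset.Ico k n).inf fun j =>
        max (val H T n j ψ) ((Finset.Ico k j).sup fun i => val H T n i φ)

/-- Renaming of atoms in a formula. -/
def TForm.map {α β : Type} (f : α → β) : TForm α → TForm β
  | .bot => .bot
  | .atom a => .atom (f a)
  | .conj φ ψ => .conj (φ.map f) (ψ.map f)
  | .disj φ ψ => .disj (φ.map f) (ψ.map f)
  | .impl φ ψ => .impl (φ.map f) (ψ.map f)
  | .prev φ => .prev (φ.map f)
  | .since φ ψ => .since (φ.map f) (ψ.map f)
  | .trig φ ψ => .trig (φ.map f) (ψ.map f)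
  | .next φ => .next (φ.map f)
  | .untl φ ψ => .untl (φ.map f) (ψ.map f)
  | .rels φ ψ => .rels (φ.map f) (ψ.map f)

/-- The set of subformulas of a formula (including the formula itself). -/
def subf {α : Type} : TForm α → Set (TForm α)
  | .bot => {.bot}
  | .atom a => {.atom a}
  | .conj φ ψ => insert (.conj φ ψ) (subf φ ∪ subf ψ)
  | .disj φ ψ => insert (.disj φ ψ) (subf φ ∪ subf ψ)
  | .impl φ ψ => insert (.impl φ ψ) (subf φ ∪ subf ψ)
  | .prev φ => insert (.prev φ) (subf φ)
  | .since φ ψ => insert (.since φ ψ) (subf φ ∪ subf ψ)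
  | .trig φ ψ => insert (.trig φ ψ) (subf φ ∪ subf ψ)
  | .next φ => insert (.next φ) (subf φ)
  | .untl φ ψ => insert (.untl φ ψ) (subf φ ∪ subf ψ)
  | .rels φ ψ => insert (.rels φ ψ) (subf φ ∪ subf ψ)

/-- The set of subformulas of the formulas of a theory `Γ`. -/
def subfTh {α : Type} (Γ : Set (TForm α)) : Set (TForm α) := ⋃ φ ∈ Γ, subf φ

/-- The extended alphabet `𝒜⁺`: original atoms (`Sum.inl`) plus a fresh
labelling atom `L_μ` (`Sum.inr μ`) for every formula `μ` over `𝒜`. -/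
abbrev ExtAlph (α : Type) := α ⊕ TForm α

/-- The label `L_μ` of a formula `μ`, as a formula over the extended alphabet:
`L_⊥ = ⊥`, `L_a = a` for atoms `a`, and a fresh atom `Sum.inr μ` otherwise. -/
def lab {α : Type} : TForm α → TForm (ExtAlph α)
  | .bot => .bot
  | .atom a => .atom (Sum.inl a)
  | μ => .atom (Sum.inr μ)

/-- Negation `¬φ := φ → ⊥`. -/
def tneg {β : Type} (φ : TForm β) : TForm β := .impl φ .bot

/-- Truth `⊤ := ¬⊥`. -/
def ttop {β : Type} : TForm β := tneg .bot

/-- Double implication `φ ↔ ψ`. -/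
def tiff {β : Type} (φ ψ : TForm β) : TForm β := .conj (.impl φ ψ) (.impl ψ φ)

/-- Always `□φ := ⊥ R φ`. -/
def talways {β : Type} (φ : TForm β) : TForm β := .rels .bot φ

/-- Weak next `○̂φ := ¬○⊤ ∨ ○φ`. -/
def twnext {β : Type} (φ : TForm β) : TForm β := .disj (tneg (.next ttop)) (.next φ)

/-- The definition `η(μ)` of the label `L_μ` of a formula `μ`. -/
def eta {α : Type} : TForm α → Set (TForm (ExtAlph α))
  | .bot => ∅
  | .atom _ => ∅
  | .conj φ ψ =>
      {talways (tiff (lab (.conj φ ψ)) (.conj (lab φ) (lab ψ)))}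
  | .disj φ ψ =>
      {talways (tiff (lab (.disj φ ψ)) (.disj (lab φ) (lab ψ)))}
  | .impl φ ψ =>
      {talways (tiff (lab (.impl φ ψ)) (.impl (lab φ) (lab ψ)))}
  | .prev φ =>
      {twnext (talways (tiff (lab (.prev φ)) (.prev (lab φ)))),
       tneg (lab (.prev φ))}
  | .since φ ψ =>
      {twnext (talways (tiff (lab (.since φ ψ))
          (.disj (lab ψ) (.conj (lab φ) (.prev (lab (.since φ ψ))))))),
       tiff (lab (.since φ ψ)) (lab ψ)}
  | .trig φ ψ =>
      {twnext (talways (tiff (lab (.trig φ ψ))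
          (.conj (lab ψ) (.disj (lab φ) (.prev (lab (.trig φ ψ))))))),
       tiff (lab (.trig φ ψ)) (lab ψ)}
  | .next φ =>
      {twnext (talways (tiff (.prev (lab (.next φ))) (lab φ))),
       talways (.impl (tneg (.next ttop)) (tneg (lab (.next φ))))}
  | .untl φ ψ =>
      {twnext (talways (tiff (.prev (lab (.untl φ ψ)))
          (.disj (.prev (lab ψ)) (.conj (.prev (lab φ)) (lab (.untl φ ψ)))))),
       talways (.impl (tneg (.next ttop)) (tiff (lab (.untl φ ψ)) (lab ψ)))}
  | .rels φ ψ =>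
      {twnext (talways (tiff (.prev (lab (.rels φ ψ)))
          (.conj (.prev (lab ψ)) (.disj (.prev (lab φ)) (lab (.rels φ ψ)))))),
       talways (.impl (tneg (.next ttop)) (tiff (lab (.rels φ ψ)) (lab ψ)))}

/-- The translation `σ(Γ) = {L_φ | φ ∈ Γ} ∪ ⋃ {η(μ) | μ ∈ subf(Γ)}`. -/
def sigmaT {α : Type} (Γ : Set (TForm α)) : Set (TForm (ExtAlph α)) :=
  (lab '' Γ) ∪ ⋃ μ ∈ subfTh Γ, eta μ

/-- Restriction of a trace over the extended alphabet to the original alphabet `𝒜`. -/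
def restrict {α : Type} (X : ℕ → Set (ExtAlph α)) : ℕ → Set α :=
  fun k => {a | Sum.inl a ∈ X k}

/-- Extend a trace of length `n` (indexed by `Fin n`) to all of `ℕ` (by `∅`). -/
def pad {β : Type} (n : ℕ) (f : Fin n → Set β) : ℕ → Set β :=
  fun k => if h : k < n then f ⟨k, h⟩ else ∅

/-- The set of temporal stable models of length `n` of a theory `Δ`: total
traces `⟨T,T⟩` satisfying `Δ` such that no strictly smaller `H < T` gives an
HT-model `⟨H,T⟩` of `Δ`. -/
def TSM {β : Type} (n : ℕ) (Δ : Set (TForm β)) : Set (Fin n → Set β) :=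
  {Tt | (∀ δ ∈ Δ, sat n (pad n Tt) (pad n Tt) 0 δ) ∧
        ¬ ∃ Hh : Fin n → Set β, (∀ i, Hh i ⊆ Tt i) ∧ Hh ≠ Tt ∧
            ∀ δ ∈ Δ, sat n (pad n Hh) (pad n Tt) 0 δ}


section Semantics

variable {α β : Type} {n : ℕ}

theorem sat_mono {H T : ℕ → Set α} (hHT : ∀ k, H k ⊆ T k) :
    ∀ (φ : TForm α) (k : ℕ), sat n H T k φ → sat n T T k φ := by
  intro φ
  induction φ with
  | bot => exact fun _ h => h
  | impl => exact fun _ h => ⟨h.2, h.2⟩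
  | atom a => exact fun k h => hHT k h
  | conj φ ψ ihφ ihψ => exact fun k h => ⟨ihφ k h.1, ihψ k h.2⟩
  | disj φ ψ ihφ ihψ => exact fun k h => h.imp (ihφ k) (ihψ k)
  | prev φ ih | next φ ih => exact fun k h => ⟨h.1, ih _ h.2⟩
  | since φ ψ ihφ ihψ =>
      rintro k ⟨j, hjk, hψ, hφ⟩
      exact ⟨j, hjk, ihψ j hψ, fun i h₁ h₂ => ihφ i (hφ i h₁ h₂)⟩
  | untl φ ψ ihφ ihψ =>
      rintro k ⟨j, hkj, hjn, hψ, hφ⟩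
      exact ⟨j, hkj, hjn, ihψ j hψ, fun i h₁ h₂ => ihφ i (hφ i h₁ h₂)⟩
  | trig φ ψ ihφ ihψ =>
      intro k h j hjk
      exact (h j hjk).imp (ihψ j) fun ⟨i, h₁, h₂, hφ⟩ => ⟨i, h₁, h₂, ihφ i hφ⟩
  | rels φ ψ ihφ ihψ =>
      intro k h j hkj hjn
      exact (h j hkj hjn).imp (ihψ j) fun ⟨i, h₁, h₂, hφ⟩ => ⟨i, h₁, h₂, ihφ i hφ⟩

theorem sat_map (f : α → β) (H T : ℕ → Set β) (φ : TForm α) (k : ℕ) :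
    sat n H T k (φ.map f) ↔ sat n (fun i => f ⁻¹' H i) (fun i => f ⁻¹' T i) k φ := by
  induction φ generalizing H T k <;> simp_all [TForm.map, sat]

end Semantics

section DerivedConnectives

variable {β : Type} {n k : ℕ} {H T : ℕ → Set β} {φ ψ : TForm β}

@[simp] theorem sat_tneg : sat n H T k (tneg φ) ↔ ¬ sat n H T k φ ∧ ¬ sat n T T k φ := by
  simp [tneg, sat]

@[simp] theorem sat_ttop : sat n H T k ttop := by
  simp [ttop, sat]

@[simp] theorem sat_tiff :
    sat n H T k (tiff φ ψ) ↔
      (sat n H T k φ ↔ sat n H T k ψ) ∧ (sat n T T k φ ↔ sat n T T k ψ) := by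
  simp only [tiff, sat]
  tauto

@[simp] theorem sat_talways :
    sat n H T k (talways φ) ↔ ∀ j, k ≤ j → j < n → sat n H T j φ := by
  simp [talways, sat]

@[simp] theorem sat_twnext : sat n H T k (twnext φ) ↔ (k + 1 < n → sat n H T (k + 1) φ) := by
  by_cases hk : k + 1 < n <;> simp [twnext, sat, hk]

theorem sat_twnext_talways_zero :
    sat n H T 0 (twnext (talways φ)) ↔ ∀ k, k + 1 < n → sat n H T (k + 1) φ := by
  simp only [sat_twnext, sat_talways, zero_add]
  refine ⟨fun h k hk => h (by omega) _ (by omega) hk, fun h _ j hj hjn => ?_⟩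
  obtain ⟨k, rfl⟩ : ∃ k, j = k + 1 := ⟨j - 1, by omega⟩
  exact h k hjn

theorem sat_talways_last {m : ℕ} :
    sat (m + 1) H T 0 (talways (.impl (tneg (.next ttop)) φ)) ↔
      sat (m + 1) H T m φ ∧ sat (m + 1) T T m φ := by
  simp only [sat_talways, sat, sat_tneg, sat_ttop, and_true, not_lt, and_self, zero_le,
    true_imp_iff]
  refine ⟨fun h => (h m (by omega)).imp (· le_rfl) (· le_rfl), fun h k _ => ?_⟩
  constructor <;> intro hk <;> obtain rfl : k = m := by omega
  exacts [h.1, h.2]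

end DerivedConnectives

section Unfolding

variable {β : Type} {n k : ℕ} {H T : ℕ → Set β} {φ ψ : TForm β}

theorem sat_since_iff :
    sat n H T k (.since φ ψ) ↔
      sat n H T k ψ ∨ (sat n H T k φ ∧ 0 < k ∧ sat n H T (k - 1) (.since φ ψ)) := by
  simp only [sat]
  constructor
  · rintro ⟨j, hjk, hψ, hφ⟩
    rcases hjk.eq_or_lt with rfl | hjk
    · exact Or.inl hψ
    · exact Or.inr ⟨hφ k hjk le_rfl, by omega, j, by omega, hψ,
        fun i h₁ h₂ => hφ i h₁ (by omega)⟩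
  · rintro (hψ | ⟨hφk, -, j, hjk, hψ, hφ⟩)
    · exact ⟨k, le_rfl, hψ, fun i h₁ h₂ => absurd h₂ (by omega)⟩
    · refine ⟨j, by omega, hψ, fun i h₁ h₂ => ?_⟩
      rcases h₂.eq_or_lt with rfl | h₂
      · exact hφk
      · exact hφ i h₁ (by omega)

theorem sat_trig_iff :
    sat n H T k (.trig φ ψ) ↔
      sat n H T k ψ ∧ (sat n H T k φ ∨ (0 < k → sat n H T (k - 1) (.trig φ ψ))) := by
  simp only [sat]
  constructor
  · intro h
    refine ⟨(h k le_rfl).resolve_right fun ⟨i, h₁, h₂, _⟩ => by omega, ?_⟩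
    refine or_iff_not_imp_left.2 fun hφk _ j hj => ?_
    rcases h j (by omega) with hψ | ⟨i, h₁, h₂, hφ⟩
    · exact Or.inl hψ
    · rcases h₂.eq_or_lt with rfl | h₂
      · exact absurd hφ hφk
      · exact Or.inr ⟨i, h₁, by omega, hφ⟩
  · rintro ⟨hψ, hφ | hprev⟩ j hj
    · rcases hj.eq_or_lt with rfl | hj
      · exact Or.inl hψ
      · exact Or.inr ⟨k, hj, le_rfl, hφ⟩
    · rcases hj.eq_or_lt with rfl | hj
      · exact Or.inl hψ
      · exact (hprev (by omega) j (by omega)).imp_right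
          fun ⟨i, h₁, h₂, hφ⟩ => ⟨i, h₁, by omega, hφ⟩

theorem sat_untl_iff (hk : k < n) :
    sat n H T k (.untl φ ψ) ↔
      sat n H T k ψ ∨ (sat n H T k φ ∧ k + 1 < n ∧ sat n H T (k + 1) (.untl φ ψ)) := by
  simp only [sat]
  constructor
  · rintro ⟨j, hkj, hjn, hψ, hφ⟩
    rcases hkj.eq_or_lt with rfl | hkj
    · exact Or.inl hψ
    · exact Or.inr ⟨hφ k le_rfl hkj, by omega, j, hkj, hjn, hψ,
        fun i h₁ h₂ => hφ i (by omega) h₂⟩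
  · rintro (hψ | ⟨hφk, -, j, hkj, hjn, hψ, hφ⟩)
    · exact ⟨k, le_rfl, hk, hψ, fun i h₁ h₂ => absurd h₂ (by omega)⟩
    · refine ⟨j, by omega, hjn, hψ, fun i h₁ h₂ => ?_⟩
      rcases h₁.eq_or_lt with rfl | h₁
      · exact hφk
      · exact hφ i h₁ h₂

theorem sat_rels_iff (hk : k < n) :
    sat n H T k (.rels φ ψ) ↔
      sat n H T k ψ ∧ (sat n H T k φ ∨ (k + 1 < n → sat n H T (k + 1) (.rels φ ψ))) := by
  simp only [sat]
  constructor
  · intro h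
    refine ⟨(h k le_rfl hk).resolve_right fun ⟨i, h₁, h₂, _⟩ => by omega, ?_⟩
    refine or_iff_not_imp_left.2 fun hφk _ j hj hjn => ?_
    rcases h j (by omega) hjn with hψ | ⟨i, h₁, h₂, hφ⟩
    · exact Or.inl hψ
    · rcases h₁.eq_or_lt with rfl | h₁
      · exact absurd hφ hφk
      · exact Or.inr ⟨i, h₁, h₂, hφ⟩
  · rintro ⟨hψ, hφ | hnext⟩ j hj hjn
    · rcases hj.eq_or_lt with rfl | hj
      · exact Or.inl hψ
      · exact Or.inr ⟨k, le_rfl, hj, hφ⟩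
    · rcases hj.eq_or_lt with rfl | hj
      · exact Or.inl hψ
      · exact (hnext (by omega) j hj hjn).imp_right
          fun ⟨i, h₁, h₂, hφ⟩ => ⟨i, by omega, h₂, hφ⟩

end Unfolding

section Recursion

variable {n : ℕ} {p q A B A' B' : ℕ → Prop}

theorem iff_of_since_recursion (hA : ∀ k < n, A k ↔ A' k) (hB : ∀ k < n, B k ↔ B' k)
    (hp : ∀ k < n, p k ↔ A k ∨ (B k ∧ 0 < k ∧ p (k - 1)))
    (hq : ∀ k < n, q k ↔ A' k ∨ (B' k ∧ 0 < k ∧ q (k - 1))) :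
    ∀ k < n, p k ↔ q k := by
  intro k
  induction k with
  | zero =>
      intro hk
      rw [hp 0 hk, hq 0 hk, hA 0 hk]
      simp
  | succ k ih =>
      intro hk
      rw [hp _ hk, hq _ hk, hA _ hk, hB _ hk]
      exact or_congr_right (and_congr_right fun _ => and_congr_right fun _ => ih (by omega))

/- Negating both sides turns a trigger recursion into a since recursion
(and, below, a release recursion into an until recursion). -/
theorem iff_of_trig_recursion (hA : ∀ k < n, A k ↔ A' k) (hB : ∀ k < n, B k ↔ B' k)
    (hp : ∀ k < n, p k ↔ A k ∧ (B k ∨ (0 < k → p (k - 1))))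
    (hq : ∀ k < n, q k ↔ A' k ∧ (B' k ∨ (0 < k → q (k - 1)))) :
    ∀ k < n, p k ↔ q k := by
  have h := iff_of_since_recursion (p := fun k => ¬ p k) (q := fun k => ¬ q k)
    (fun k hk => not_congr (hA k hk)) (fun k hk => not_congr (hB k hk))
    (fun k hk => by rw [hp k hk]; tauto) (fun k hk => by rw [hq k hk]; tauto)
  exact fun k hk => not_iff_not.1 (h k hk)

theorem iff_of_untl_recursion (hA : ∀ k < n, A k ↔ A' k) (hB : ∀ k < n, B k ↔ B' k)
    (hp : ∀ k < n, p k ↔ A k ∨ (B k ∧ k + 1 < n ∧ p (k + 1)))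
    (hq : ∀ k < n, q k ↔ A' k ∨ (B' k ∧ k + 1 < n ∧ q (k + 1))) :
    ∀ k < n, p k ↔ q k := by
  suffices h : ∀ d k, k + d + 1 = n → (p k ↔ q k) from
    fun k hk => h (n - k - 1) k (by omega)
  intro d
  induction d with
  | zero =>
      intro k hk
      rw [hp k (by omega), hq k (by omega), hA k (by omega)]
      simp [show ¬ k + 1 < n by omega]
  | succ d ih =>
      intro k hk
      rw [hp k (by omega), hq k (by omega), hA k (by omega), hB k (by omega),
        ih (k + 1) (by omega)]

theorem iff_of_rels_recursion (hA : ∀ k < n, A k ↔ A' k) (hB : ∀ k < n, B k ↔ B' k)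
    (hp : ∀ k < n, p k ↔ A k ∧ (B k ∨ (k + 1 < n → p (k + 1))))
    (hq : ∀ k < n, q k ↔ A' k ∧ (B' k ∨ (k + 1 < n → q (k + 1)))) :
    ∀ k < n, p k ↔ q k := by
  have h := iff_of_untl_recursion (p := fun k => ¬ p k) (q := fun k => ¬ q k)
    (fun k hk => not_congr (hA k hk)) (fun k hk => not_congr (hB k hk))
    (fun k hk => by rw [hp k hk]; tauto) (fun k hk => by rw [hq k hk]; tauto)
  exact fun k hk => not_iff_not.1 (h k hk)

end Recursion

section Subformulas

variable {α : Type}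

theorem mem_subf_self (φ : TForm α) : φ ∈ subf φ := by
  cases φ <;> simp [subf]

theorem subf_subset_subf {μ ν : TForm α} (h : ν ∈ subf μ) : subf ν ⊆ subf μ := by
  induction μ <;>
    simp only [subf, Set.mem_insert_iff, Set.mem_singleton_iff, Set.mem_union] at h <;>
    grind [subf]

theorem subset_subfTh (Γ : Set (TForm α)) : Γ ⊆ subfTh Γ :=
  fun φ hφ => Set.mem_biUnion hφ (mem_subf_self φ)

theorem subf_subset_subfTh {Γ : Set (TForm α)} {μ : TForm α} (hμ : μ ∈ subfTh Γ) :
    subf μ ⊆ subfTh Γ := by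
  obtain ⟨φ, hφ, hμφ⟩ := Set.mem_iUnion₂.1 hμ
  exact (subf_subset_subf hμφ).trans (Set.subset_biUnion_of_mem hφ)

end Subformulas

section Fixpoint

variable {α : Type} {n : ℕ} {v w v' w' : TForm α → ℕ → Prop}

/-- `v` is the valuation being unfolded and `w` the valuation at the "there" level, which only
implication consults; atoms are left unconstrained. -/
def unfoldStep (n : ℕ) (v w : TForm α → ℕ → Prop) : TForm α → ℕ → Prop
  | .bot, _ => False
  | .atom a, k => v (.atom a) k
  | .conj φ ψ, k => v φ k ∧ v ψ k
  | .disj φ ψ, k => v φ k ∨ v ψ k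
  | .impl φ ψ, k => (v φ k → v ψ k) ∧ (w φ k → w ψ k)
  | .prev φ, k => 0 < k ∧ v φ (k - 1)
  | .since φ ψ, k => v ψ k ∨ (v φ k ∧ 0 < k ∧ v (.since φ ψ) (k - 1))
  | .trig φ ψ, k => v ψ k ∧ (v φ k ∨ (0 < k → v (.trig φ ψ) (k - 1)))
  | .next φ, k => k + 1 < n ∧ v φ (k + 1)
  | .untl φ ψ, k => v ψ k ∨ (v φ k ∧ k + 1 < n ∧ v (.untl φ ψ) (k + 1))
  | .rels φ ψ, k => v ψ k ∧ (v φ k ∨ (k + 1 < n → v (.rels φ ψ) (k + 1)))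

def Unfolds (n : ℕ) (v w : TForm α → ℕ → Prop) (μ : TForm α) : Prop :=
  ∀ k < n, v μ k ↔ unfoldStep n v w μ k

theorem sat_unfolds (H T : ℕ → Set α) (μ : TForm α) :
    Unfolds n (fun φ k => sat n H T k φ) (fun φ k => sat n T T k φ) μ := by
  intro k hk
  cases μ with
  | since => exact sat_since_iff
  | trig => exact sat_trig_iff
  | untl => exact sat_untl_iff hk
  | rels => exact sat_rels_iff hk
  | _ => rfl

theorem Unfolds.congr {μ : TForm α} (h : Unfolds n v w μ)
    (hv : ∀ ν ∈ subf μ, ∀ k < n, v ν k ↔ v' ν k)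
    (hw : ∀ ν ∈ subf μ, ∀ k < n, w ν k ↔ w' ν k) :
    Unfolds n v' w' μ := by
  intro k hk
  rw [← hv μ (mem_subf_self μ) k hk, h k hk]
  have hk' : k - 1 < n := by omega
  cases μ with
  | bot => rfl
  | atom => exact hv _ (mem_subf_self _) k hk
  | prev φ | next φ =>
      have hφ := hv φ (by simp [subf, mem_subf_self])
      by_cases hk₁ : k + 1 < n <;> simp [unfoldStep, hφ, hk', hk₁]
  | conj φ ψ | disj φ ψ | impl φ ψ | since φ ψ | trig φ ψ | untl φ ψ | rels φ ψ =>
      have hφ := hv φ (by simp [subf, mem_subf_self])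
      have hψ := hv ψ (by simp [subf, mem_subf_self])
      have hφ' := hw φ (by simp [subf, mem_subf_self])
      have hψ' := hw ψ (by simp [subf, mem_subf_self])
      have hμ := hv _ (mem_subf_self _)
      by_cases hk₁ : k + 1 < n <;> simp [unfoldStep, hφ, hψ, hφ', hψ', hμ, hk, hk', hk₁]

theorem agree_of_unfolds {S : Set (TForm α)}
    (hv : ∀ μ ∈ S, Unfolds n v w μ) (hw : ∀ μ ∈ S, Unfolds n w w μ)
    (hv' : ∀ μ ∈ S, Unfolds n v' w' μ) (hw' : ∀ μ ∈ S, Unfolds n w' w' μ)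
    (hatom : ∀ a, (∀ k < n, v (.atom a) k ↔ v' (.atom a) k) ∧
      ∀ k < n, w (.atom a) k ↔ w' (.atom a) k)
    (μ : TForm α) (hμ : subf μ ⊆ S) :
    (∀ k < n, v μ k ↔ v' μ k) ∧ ∀ k < n, w μ k ↔ w' μ k := by
  induction μ with
  | atom a => exact hatom a
  | bot =>
      have hS := hμ rfl
      exact ⟨fun k hk => (hv _ hS k hk).trans (hv' _ hS k hk).symm,
        fun k hk => (hw _ hS k hk).trans (hw' _ hS k hk).symm⟩
  | prev φ ih | next φ ih =>
      have hS := hμ (Or.inl rfl)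
      obtain ⟨hφ, hφ'⟩ := ih fun ν h => hμ (Or.inr h)
      refine ⟨fun k hk => ?_, fun k hk => ?_⟩
      · rw [hv _ hS k hk, hv' _ hS k hk]
        by_cases hk₁ : k + 1 < n <;>
          simp [unfoldStep, hk₁, hφ (k - 1) (by omega), hφ (k + 1)]
      · rw [hw _ hS k hk, hw' _ hS k hk]
        by_cases hk₁ : k + 1 < n <;>
          simp [unfoldStep, hk₁, hφ' (k - 1) (by omega), hφ' (k + 1)]
  | conj φ ψ ihφ ihψ | disj φ ψ ihφ ihψ | impl φ ψ ihφ ihψ =>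
      have hS := hμ (Or.inl rfl)
      obtain ⟨hφ, hφ'⟩ := ihφ fun ν h => hμ (Or.inr (Or.inl h))
      obtain ⟨hψ, hψ'⟩ := ihψ fun ν h => hμ (Or.inr (Or.inr h))
      refine ⟨fun k hk => ?_, fun k hk => ?_⟩
      · rw [hv _ hS k hk, hv' _ hS k hk]
        simp [unfoldStep, hφ k hk, hψ k hk, hφ' k hk, hψ' k hk]
      · rw [hw _ hS k hk, hw' _ hS k hk]
        simp [unfoldStep, hφ' k hk, hψ' k hk]
  | since φ ψ ihφ ihψ =>
      have hS := hμ (Or.inl rfl)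
      obtain ⟨hφ, hφ'⟩ := ihφ fun ν h => hμ (Or.inr (Or.inl h))
      obtain ⟨hψ, hψ'⟩ := ihψ fun ν h => hμ (Or.inr (Or.inr h))
      exact ⟨iff_of_since_recursion hψ hφ (hv _ hS) (hv' _ hS),
        iff_of_since_recursion hψ' hφ' (hw _ hS) (hw' _ hS)⟩
  | trig φ ψ ihφ ihψ =>
      have hS := hμ (Or.inl rfl)
      obtain ⟨hφ, hφ'⟩ := ihφ fun ν h => hμ (Or.inr (Or.inl h))
      obtain ⟨hψ, hψ'⟩ := ihψ fun ν h => hμ (Or.inr (Or.inr h))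
      exact ⟨iff_of_trig_recursion hψ hφ (hv _ hS) (hv' _ hS),
        iff_of_trig_recursion hψ' hφ' (hw _ hS) (hw' _ hS)⟩
  | untl φ ψ ihφ ihψ =>
      have hS := hμ (Or.inl rfl)
      obtain ⟨hφ, hφ'⟩ := ihφ fun ν h => hμ (Or.inr (Or.inl h))
      obtain ⟨hψ, hψ'⟩ := ihψ fun ν h => hμ (Or.inr (Or.inr h))
      exact ⟨iff_of_untl_recursion hψ hφ (hv _ hS) (hv' _ hS),
        iff_of_untl_recursion hψ' hφ' (hw _ hS) (hw' _ hS)⟩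
  | rels φ ψ ihφ ihψ =>
      have hS := hμ (Or.inl rfl)
      obtain ⟨hφ, hφ'⟩ := ihφ fun ν h => hμ (Or.inr (Or.inl h))
      obtain ⟨hψ, hψ'⟩ := ihψ fun ν h => hμ (Or.inr (Or.inr h))
      exact ⟨iff_of_rels_recursion hψ hφ (hv _ hS) (hv' _ hS),
        iff_of_rels_recursion hψ' hφ' (hw _ hS) (hw' _ hS)⟩

end Fixpoint

section Labels

variable {α : Type} {n : ℕ}

def labelVal (n : ℕ) (H' T' : ℕ → Set (ExtAlph α)) (μ : TForm α) (k : ℕ) : Prop :=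
  sat n H' T' k (lab μ)

theorem sat_eta_iff (hn : 0 < n) (H' T' : ℕ → Set (ExtAlph α)) (μ : TForm α) :
    (∀ δ ∈ eta μ, sat n H' T' 0 δ) ↔
      Unfolds n (labelVal n H' T') (labelVal n T' T') μ ∧
        Unfolds n (labelVal n T' T') (labelVal n T' T') μ := by
  obtain ⟨m, rfl⟩ : ∃ m, n = m + 1 := ⟨n - 1, by omega⟩
  cases μ with
  | bot => simp [eta, Unfolds, unfoldStep, labelVal, lab, sat]
  | atom => simp [eta, Unfolds, unfoldStep]
  | conj φ ψ | disj φ ψ | impl φ ψ =>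
    simp [eta, Unfolds, unfoldStep, labelVal, sat, imp_and, forall_and]
  | prev φ | since φ ψ | trig φ ψ =>
    simp only [eta, Set.mem_insert_iff, Set.mem_singleton_iff, forall_eq_or_imp, forall_eq,
      sat_twnext_talways_zero, sat_tiff, sat_tneg, Unfolds, Nat.forall_lt_succ_left, unfoldStep,
      labelVal, sat, Nat.add_lt_add_iff_right, Nat.add_sub_cancel, Nat.zero_lt_succ, lt_irrefl,
      true_and, false_and, and_false, or_false, iff_false, forall_and, false_imp_iff,
      true_imp_iff, or_true, and_true]
    exact and_comm.trans and_and_and_comm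
  | next φ | untl φ ψ | rels φ ψ =>
    simp +contextual only [eta, Set.mem_insert_iff, Set.mem_singleton_iff, forall_eq_or_imp,
      forall_eq, sat_twnext_talways_zero, sat_talways_last, sat_tiff, sat_tneg, Unfolds,
      Nat.forall_lt_succ_right, unfoldStep, labelVal, sat, Nat.add_lt_add_iff_right,
      Nat.add_sub_cancel, Nat.zero_lt_succ, lt_irrefl, true_and, false_and, and_false, or_false,
      iff_false, forall_and, false_imp_iff, true_imp_iff, or_true, and_true, and_self,
      and_self_right]
    exact and_and_and_comm

def LabelsCorrect (n : ℕ) (S : Set (TForm α)) (H T : ℕ → Set α)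
    (H' T' : ℕ → Set (ExtAlph α)) : Prop :=
  ∀ μ ∈ S, ∀ k < n, sat n H' T' k (lab μ) ↔ sat n H T k μ

theorem forall_eta_iff_labelsCorrect (hn : 0 < n) {S : Set (TForm α)}
    (hS : ∀ μ ∈ S, subf μ ⊆ S) (H' T' : ℕ → Set (ExtAlph α)) :
    (∀ μ ∈ S, ∀ δ ∈ eta μ, sat n H' T' 0 δ) ↔
      LabelsCorrect n S (restrict H') (restrict T') H' T' ∧
        LabelsCorrect n S (restrict T') (restrict T') T' T' := by
  constructor
  · intro h
    have hl := fun μ hμ => (sat_eta_iff hn H' T' μ).1 (h μ hμ)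
    have hagree := agree_of_unfolds (fun μ hμ => (hl μ hμ).1) (fun μ hμ => (hl μ hμ).2)
      (fun μ _ => sat_unfolds (restrict H') (restrict T') μ)
      (fun μ _ => sat_unfolds (restrict T') (restrict T') μ)
      (fun _ => ⟨fun _ _ => Iff.rfl, fun _ _ => Iff.rfl⟩)
    exact ⟨fun μ hμ => (hagree μ (hS μ hμ)).1, fun μ hμ => (hagree μ (hS μ hμ)).2⟩
  · rintro ⟨hH, hT⟩ μ hμ
    exact (sat_eta_iff hn H' T' μ).2
      ⟨(sat_unfolds _ _ μ).congr (fun ν hν k hk => (hH ν (hS μ hμ hν) k hk).symm)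
          (fun ν hν k hk => (hT ν (hS μ hμ hν) k hk).symm),
        (sat_unfolds _ _ μ).congr (fun ν hν k hk => (hT ν (hS μ hμ hν) k hk).symm)
          (fun ν hν k hk => (hT ν (hS μ hμ hν) k hk).symm)⟩

theorem sat_sigmaT_union_iff (hn : 0 < n) (Γ Γ' : Set (TForm α))
    (H' T' : ℕ → Set (ExtAlph α)) :
    (∀ δ ∈ sigmaT Γ ∪ TForm.map Sum.inl '' Γ', sat n H' T' 0 δ) ↔
      (LabelsCorrect n (subfTh Γ) (restrict H') (restrict T') H' T' ∧
        LabelsCorrect n (subfTh Γ) (restrict T') (restrict T') T' T') ∧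
        ∀ φ ∈ Γ ∪ Γ', sat n (restrict H') (restrict T') 0 φ := by
  have hS : ∀ μ ∈ subfTh Γ, subf μ ⊆ subfTh Γ := fun _ => subf_subset_subfTh
  rw [← forall_eta_iff_labelsCorrect hn hS]
  simp only [sigmaT, Set.mem_union, Set.mem_image, Set.mem_iUnion₂, or_imp, forall_and,
    forall_exists_index, and_imp, forall_apply_eq_imp_iff₂, sat_map]
  constructor
  · rintro ⟨⟨hlab, hη⟩, hΓ'⟩
    have hη : ∀ μ ∈ subfTh Γ, ∀ δ ∈ eta μ, sat n H' T' 0 δ := fun μ hμ δ hδ => hη δ μ hμ hδ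
    have hL := ((forall_eta_iff_labelsCorrect hn hS H' T').1 hη).1
    exact ⟨hη, fun φ hφ => (hL φ (subset_subfTh Γ hφ) 0 hn).1 (hlab φ hφ), hΓ'⟩
  · rintro ⟨hη, hΓ, hΓ'⟩
    have hL := ((forall_eta_iff_labelsCorrect hn hS H' T').1 hη).1
    exact ⟨⟨fun φ hφ => (hL φ (subset_subfTh Γ hφ) 0 hn).2 (hΓ φ hφ),
      fun δ μ hμ hδ => hη μ hμ δ hδ⟩, hΓ'⟩

end Labels

section Extension

variable {α β : Type} {n : ℕ}

theorem lab_injective : Function.Injective (lab : TForm α → TForm (ExtAlph α)) := by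
  intro μ ν h
  cases μ <;> cases ν <;> simp_all [lab]

theorem lab_eq_bot_or_atom (μ : TForm α) : μ = .bot ∨ ∃ x, lab μ = .atom x := by
  cases μ <;> simp [lab]

theorem pad_of_lt {X : Fin n → Set β} {k : ℕ} (hk : k < n) : pad n X k = X ⟨k, hk⟩ :=
  dif_pos hk

theorem pad_mono {X Y : Fin n → Set β} (h : ∀ i, X i ⊆ Y i) (k : ℕ) :
    pad n X k ⊆ pad n Y k := by
  unfold pad
  split_ifs
  exacts [h _, le_rfl]

theorem restrict_pad (X' : Fin n → Set (ExtAlph α)) :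
    restrict (pad n X') = pad n fun i => {a | Sum.inl a ∈ X' i} := by
  funext k
  unfold restrict pad
  split_ifs <;> rfl

def extendTrace (n : ℕ) (S : Set (TForm α)) (H T : ℕ → Set α) (i : Fin n) :
    Set (ExtAlph α) :=
  {x | ∃ μ ∈ S ∪ Set.range .atom, lab μ = .atom x ∧ sat n H T i μ}

theorem inl_mem_extendTrace {S : Set (TForm α)} {H T : ℕ → Set α} {i : Fin n} {a : α} :
    Sum.inl a ∈ extendTrace n S H T i ↔ a ∈ H i := by
  refine ⟨fun ⟨μ, _, hμ, h⟩ => ?_, fun h => ⟨.atom a, Or.inr ⟨a, rfl⟩, rfl, h⟩⟩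
  obtain rfl : μ = .atom a := lab_injective hμ
  exact h

theorem restrict_extendTrace_pad (S : Set (TForm α)) (X : Fin n → Set α) (T : ℕ → Set α) :
    (fun i => {a | Sum.inl a ∈ extendTrace n S (pad n X) T i}) = X := by
  funext i
  ext a
  exact inl_mem_extendTrace.trans (by rw [pad_of_lt i.2])

theorem labelsCorrect_extendTrace (S : Set (TForm α)) (H T : ℕ → Set α)
    (T' : ℕ → Set (ExtAlph α)) : LabelsCorrect n S H T (pad n (extendTrace n S H T)) T' := by
  intro μ hμ k hk
  rcases lab_eq_bot_or_atom μ with rfl | ⟨x, hx⟩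
  · exact Iff.rfl
  · rw [hx]
    show x ∈ pad n _ k ↔ _
    rw [pad_of_lt hk]
    exact ⟨fun ⟨ν, _, hν, h⟩ => lab_injective (hν.trans hx.symm) ▸ h,
      fun h => ⟨μ, Or.inl hμ, hx, h⟩⟩

theorem extendTrace_mono {S : Set (TForm α)} {H T : ℕ → Set α} (hHT : ∀ k, H k ⊆ T k)
    (i : Fin n) : extendTrace n S H T i ⊆ extendTrace n S T T i :=
  fun _ ⟨μ, hμ, hx, h⟩ => ⟨μ, hμ, hx, sat_mono hHT μ i h⟩

theorem extendTrace_subset {S : Set (TForm α)} {X' : Fin n → Set (ExtAlph α)}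
    {T : ℕ → Set α} {T' : ℕ → Set (ExtAlph α)}
    (h : LabelsCorrect n S (pad n fun i => {a | Sum.inl a ∈ X' i}) T (pad n X') T')
    (i : Fin n) : extendTrace n S (pad n fun i => {a | Sum.inl a ∈ X' i}) T i ⊆ X' i := by
  rintro x ⟨μ, hμ | ⟨a, rfl⟩, hx, hsat⟩
  · have h' := (h μ hμ i i.2).2 hsat
    rw [hx, sat, pad_of_lt i.2] at h'
    exact h'
  · cases hx
    simpa only [sat, pad_of_lt i.2, Set.mem_ofPred_eq] using hsat

end Extension

section StableModels

variable {α : Type} {n : ℕ} {Γ Γ' : Set (TForm α)}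

theorem extendTrace_mem_TSM (hn : 0 < n) {Tt : Fin n → Set α} (hTt : Tt ∈ TSM n (Γ ∪ Γ')) :
    extendTrace n (subfTh Γ) (pad n Tt) (pad n Tt) ∈
      TSM n (sigmaT Γ ∪ TForm.map Sum.inl '' Γ') := by
  obtain ⟨hsat, hmin⟩ := hTt
  set E := extendTrace n (subfTh Γ) (pad n Tt) (pad n Tt)
  have hE : restrict (pad n E) = pad n Tt := by rw [restrict_pad, restrict_extendTrace_pad]
  have hLE := labelsCorrect_extendTrace (n := n) (subfTh Γ) (pad n Tt) (pad n Tt) (pad n E)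
  refine ⟨(sat_sigmaT_union_iff hn Γ Γ' _ _).2 (by rw [hE]; exact ⟨⟨hLE, hLE⟩, hsat⟩), ?_⟩
  rintro ⟨Hh', hsub, hne, hsat'⟩
  rw [sat_sigmaT_union_iff hn, hE, restrict_pad] at hsat'
  obtain ⟨⟨hL, -⟩, hΓ⟩ := hsat'
  have hHh : (fun i => {a | Sum.inl a ∈ Hh' i}) = Tt := by
    by_contra hne'
    refine hmin ⟨_, fun i a ha => ?_, hne', hΓ⟩
    simpa only [E, inl_mem_extendTrace, pad_of_lt i.2] using hsub i ha
  refine hne (funext fun i => (hsub i).antisymm ?_)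
  have h := extendTrace_subset hL i
  rwa [hHh] at h

theorem restrict_mem_TSM (hn : 0 < n) {T' : Fin n → Set (ExtAlph α)}
    (hT' : T' ∈ TSM n (sigmaT Γ ∪ TForm.map Sum.inl '' Γ')) :
    (fun i => {a | Sum.inl a ∈ T' i}) ∈ TSM n (Γ ∪ Γ') := by
  obtain ⟨hsat', hmin'⟩ := hT'
  rw [sat_sigmaT_union_iff hn, restrict_pad] at hsat'
  obtain ⟨⟨-, hLT⟩, hΓ⟩ := hsat'
  refine ⟨hΓ, fun ⟨Hh, hsub, hne, hsatH⟩ => hmin' ⟨extendTrace n (subfTh Γ) (pad n Hh)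
    (pad n fun i => {a | Sum.inl a ∈ T' i}), fun i => ?_, fun h => hne ?_, ?_⟩⟩
  · exact (extendTrace_mono (pad_mono hsub) i).trans (extendTrace_subset hLT i)
  · rw [← restrict_extendTrace_pad (subfTh Γ) Hh, h]
  · rw [sat_sigmaT_union_iff hn, restrict_pad, restrict_pad, restrict_extendTrace_pad]
    exact ⟨⟨labelsCorrect_extendTrace _ _ _ _, hLT⟩, hsatH⟩

end StableModels

/-- Corollary: For any theory `Γ` over `α`, any theory `Γ'` over
the same alphabet and any length `n > 0`:
`TSM(Γ ∪ Γ') = {⟨H',T'⟩|_𝒜 | ⟨H',T'⟩ ∈ TSM(σ(Γ) ∪ Γ')}`,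
i.e. `Γ` and `σ(Γ)` are strongly equivalent modulo the auxiliary atoms
(`Γ'` is read over the extended alphabet via the inclusion of `𝒜` into `𝒜⁺`). -/
theorem strong_equivalence {α : Type} (Γ Γ' : Set (TForm α)) (n : ℕ) (hlen : 0 < n) :
    TSM n (Γ ∪ Γ') =
      {Tt : Fin n → Set α |
        ∃ Tt' ∈ TSM n (sigmaT Γ ∪ (TForm.map Sum.inl '' Γ')),
          Tt = fun i => {a | Sum.inl a ∈ Tt' i}} := by
  ext Tt
  constructor
  · intro hTt
    exact ⟨_, extendTrace_mem_TSM hlen hTt, (restrict_extendTrace_pad _ _ _).symm⟩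
  · rintro ⟨T', hT', rfl⟩
    exact restrict_mem_TSM hlen hT'
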